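/- Let b, c be real numbers with 0 ≤ b < c, set ω := √(c² − b²), let W₊ := W₊(b,c) and T₊ := W₊/ω. Let T₁ < T be real numbers and let ρ : [T₁, T] → ℝ be twice continuously differentiable with ρ(T₁) > 0 and ρ'(T₁) = 0, such that ρ(τ) > 0 for all τ ∈ [T₁, T), and ρ''(τ) + 2b·ρ'(τ) + c²·ρ(τ) ≤ 0 for all τ ∈ [T₁, T]. Then T ≤ T₁ + T₊, and ρ(τ) ≤ ρ(T₁)·(c/ω)·e^{−b·(τ−T₁)}·sin(ω·(T₁ + T₊ − τ)) for all τ ∈ [T₁, T). -/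

import Mathlib

open Real Set

/-!
The comparison function `σ(t) = e^{-b(t-T₁)} sin(ω(T₁ + T₊ - t))` solves
`σ'' + 2bσ' + c²σ = 0` (as `c² = b² + ω²`), is positive on `[T₁, T₁ + T₊)`, vanishes at the
node `T₁ + T₊`, and has `σ'(T₁) = 0` precisely because `cos W₊ = -b/c`. The weighted Wronskian
`e^{2bt}(σρ' - ρσ')` has derivative `e^{2bt} σ (ρ'' + 2bρ' + c²ρ) ≤ 0` while `σ ≥ 0`, and
vanishes at `T₁`; hence `σρ' ≤ ρσ'`. Before the node this makes `ρ/σ` antitone, which is the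
bound; at the node it reads `0 ≤ ρ σ'` with `σ' < 0`, so `ρ` cannot still be positive there.
-/

theorem hasDerivWithinAt_exp_mul_wronskian {p t : ℝ} {s : Set ℝ} {ρ ρ' σ σ' : ℝ → ℝ}
    {ρ'' σ'' : ℝ} (hρ : HasDerivWithinAt ρ (ρ' t) s t) (hρ' : HasDerivWithinAt ρ' ρ'' s t)
    (hσ : HasDerivWithinAt σ (σ' t) s t) (hσ' : HasDerivWithinAt σ' σ'' s t) :
    HasDerivWithinAt (fun t => exp (p * t) * (σ t * ρ' t - ρ t * σ' t))
      (exp (p * t) * (σ t * (ρ'' + p * ρ' t) - ρ t * (σ'' + p * σ' t))) s t := by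
  have hexp : HasDerivWithinAt (fun t => exp (p * t)) (exp (p * t) * p) s t :=
    ((hasDerivWithinAt_id t s).const_mul p).exp.congr_deriv (by simp)
  exact (hexp.mul ((hσ.mul hρ').sub (hρ.mul hσ'))).congr_deriv
    (by simp only [Pi.sub_apply, Pi.mul_apply]; ring)

section Sturm

variable {p q a s : ℝ} {ρ ρ' ρ'' σ σ' σ'' : ℝ → ℝ}

theorem mul_deriv_le_of_supersolution
    (hρ : ∀ t ∈ Icc a s, HasDerivWithinAt ρ (ρ' t) (Icc a s) t)
    (hρ' : ∀ t ∈ Icc a s, HasDerivWithinAt ρ' (ρ'' t) (Icc a s) t)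
    (hσ : ∀ t ∈ Icc a s, HasDerivWithinAt σ (σ' t) (Icc a s) t)
    (hσ' : ∀ t ∈ Icc a s, HasDerivWithinAt σ' (σ'' t) (Icc a s) t)
    (hρ_super : ∀ t ∈ Ioo a s, ρ'' t + p * ρ' t + q * ρ t ≤ 0)
    (hσ_sol : ∀ t ∈ Ioo a s, σ'' t + p * σ' t + q * σ t = 0)
    (hσ_nonneg : ∀ t ∈ Ioo a s, 0 ≤ σ t)
    (h_start : σ a * ρ' a ≤ ρ a * σ' a) :
    ∀ t ∈ Icc a s, σ t * ρ' t ≤ ρ t * σ' t := by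
  set J := fun t => exp (p * t) * (σ t * ρ' t - ρ t * σ' t)
  have hJ (t) (ht : t ∈ Icc a s) := hasDerivWithinAt_exp_mul_wronskian (p := p)
    (hρ t ht) (hρ' t ht) (hσ t ht) (hσ' t ht)
  have hJ_anti : AntitoneOn J (Icc a s) := by
    refine antitoneOn_of_hasDerivWithinAt_nonpos (convex_Icc a s)
      (f' := fun t => exp (p * t) * (σ t * (ρ'' t + p * ρ' t) - ρ t * (σ'' t + p * σ' t)))
      (fun t ht => (hJ t ht).continuousWithinAt) (fun t ht => ?_) (fun t ht => ?_)
    · rw [interior_Icc] at ht ⊢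
      exact (hJ t (Ioo_subset_Icc_self ht)).mono Ioo_subset_Icc_self
    · rw [interior_Icc] at ht
      have hσ''_eq : σ'' t + p * σ' t = -(q * σ t) := by linarith [hσ_sol t ht]
      calc exp (p * t) * (σ t * (ρ'' t + p * ρ' t) - ρ t * (σ'' t + p * σ' t))
          = exp (p * t) * (σ t * (ρ'' t + p * ρ' t + q * ρ t)) := by rw [hσ''_eq]; ring
        _ ≤ 0 := mul_nonpos_of_nonneg_of_nonpos (exp_pos _).le
          (mul_nonpos_of_nonneg_of_nonpos (hσ_nonneg t ht) (hρ_super t ht))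
  intro t ht
  have hJt : J t ≤ J a := hJ_anti (left_mem_Icc.2 (ht.1.trans ht.2)) ht ht.1
  have hJa : J a ≤ 0 := mul_nonpos_of_nonneg_of_nonpos (exp_pos _).le (by linarith)
  have := nonpos_of_mul_nonpos_right (hJt.trans hJa) (exp_pos (p * t))
  linarith

theorem antitoneOn_div_of_mul_deriv_le
    (hρ : ∀ t ∈ Icc a s, HasDerivWithinAt ρ (ρ' t) (Icc a s) t)
    (hσ : ∀ t ∈ Icc a s, HasDerivWithinAt σ (σ' t) (Icc a s) t)
    (hσ_pos : ∀ t ∈ Icc a s, 0 < σ t)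
    (hW : ∀ t ∈ Ioo a s, σ t * ρ' t ≤ ρ t * σ' t) :
    AntitoneOn (fun t => ρ t / σ t) (Icc a s) := by
  have hdiv (t) (ht : t ∈ Icc a s) := (hρ t ht).div (hσ t ht) (hσ_pos t ht).ne'
  refine antitoneOn_of_hasDerivWithinAt_nonpos (convex_Icc a s)
    (f' := fun t => (ρ' t * σ t - ρ t * σ' t) / σ t ^ 2)
    (fun t ht => (hdiv t ht).continuousWithinAt) (fun t ht => ?_) (fun t ht => ?_)
  · rw [interior_Icc] at ht ⊢
    exact (hdiv t (Ioo_subset_Icc_self ht)).mono Ioo_subset_Icc_self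
  · rw [interior_Icc] at ht
    exact div_nonpos_of_nonpos_of_nonneg (by linarith [hW t ht]) (sq_nonneg _)

end Sturm

section DampedOscillator

variable (b ω t₀ K : ℝ)

noncomputable def dampedSin (t : ℝ) : ℝ := exp (-(b * (t - t₀))) * sin (ω * (K - t))

noncomputable def dampedSinDeriv (t : ℝ) : ℝ :=
  -(exp (-(b * (t - t₀))) * (b * sin (ω * (K - t)) + ω * cos (ω * (K - t))))

theorem hasDerivAt_exp_neg_mul_sub (t : ℝ) :
    HasDerivAt (fun t => exp (-(b * (t - t₀)))) (-b * exp (-(b * (t - t₀)))) t :=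
  ((((hasDerivAt_id t).sub_const t₀).const_mul b).neg.exp).congr_deriv (by simp; ring)

theorem hasDerivAt_mul_const_sub (t : ℝ) : HasDerivAt (fun t => ω * (K - t)) (-ω) t :=
  (((hasDerivAt_id t).const_sub K).const_mul ω).congr_deriv (by simp)

theorem hasDerivAt_dampedSin (t : ℝ) :
    HasDerivAt (dampedSin b ω t₀ K) (dampedSinDeriv b ω t₀ K t) t :=
  ((hasDerivAt_exp_neg_mul_sub b t₀ t).mul (hasDerivAt_mul_const_sub ω K t).sin).congr_deriv
    (by simp only [dampedSinDeriv]; ring)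

theorem hasDerivAt_dampedSinDeriv (t : ℝ) :
    HasDerivAt (dampedSinDeriv b ω t₀ K)
      (-(2 * b) * dampedSinDeriv b ω t₀ K t - (b ^ 2 + ω ^ 2) * dampedSin b ω t₀ K t) t := by
  have hφ := hasDerivAt_mul_const_sub ω K t
  exact ((hasDerivAt_exp_neg_mul_sub b t₀ t).mul
    ((hφ.sin.const_mul b).add (hφ.cos.const_mul ω))).neg.congr_deriv
    (by simp only [dampedSin, dampedSinDeriv, Pi.add_apply]; ring)

@[simp] theorem dampedSin_start : dampedSin b ω t₀ K t₀ = sin (ω * (K - t₀)) := by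
  simp [dampedSin]

@[simp] theorem dampedSinDeriv_start :
    dampedSinDeriv b ω t₀ K t₀ = -(b * sin (ω * (K - t₀)) + ω * cos (ω * (K - t₀))) := by
  simp [dampedSinDeriv]

@[simp] theorem dampedSin_node : dampedSin b ω t₀ K K = 0 := by
  simp [dampedSin]

variable {b ω t₀ K}

theorem dampedSinDeriv_node_neg (hω : 0 < ω) : dampedSinDeriv b ω t₀ K K < 0 := by
  simpa [dampedSinDeriv] using mul_pos (exp_pos (-(b * (K - t₀)))) hω

theorem dampedSin_pos (hω : 0 < ω) (hK : ω * (K - t₀) < π) {t : ℝ} (ht : t ∈ Ico t₀ K) :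
    0 < dampedSin b ω t₀ K t := by
  have hpos : 0 < ω * (K - t) := mul_pos hω (by linarith [ht.2])
  have hlt : ω * (K - t) < π := by nlinarith [ht.1]
  exact mul_pos (exp_pos _) (sin_pos_of_pos_of_lt_pi hpos hlt)

end DampedOscillator

section Comparison

variable {b ω t₀ K T : ℝ} {ρ ρ' ρ'' : ℝ → ℝ}

theorem dampedSin_mul_deriv_le (hω : 0 < ω) (hK : ω * (K - t₀) < π)
    (hρ : ∀ t ∈ Icc t₀ T, HasDerivWithinAt ρ (ρ' t) (Icc t₀ T) t)
    (hρ' : ∀ t ∈ Icc t₀ T, HasDerivWithinAt ρ' (ρ'' t) (Icc t₀ T) t)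
    (hρ_super : ∀ t ∈ Icc t₀ T, ρ'' t + 2 * b * ρ' t + (b ^ 2 + ω ^ 2) * ρ t ≤ 0)
    (h_start : dampedSin b ω t₀ K t₀ * ρ' t₀ ≤ ρ t₀ * dampedSinDeriv b ω t₀ K t₀)
    {s : ℝ} (hsT : s ≤ T) (hsK : s ≤ K) :
    ∀ t ∈ Icc t₀ s, dampedSin b ω t₀ K t * ρ' t ≤ ρ t * dampedSinDeriv b ω t₀ K t := by
  have hsub : Icc t₀ s ⊆ Icc t₀ T := Icc_subset_Icc_right hsT
  exact mul_deriv_le_of_supersolution (p := 2 * b) (q := b ^ 2 + ω ^ 2)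
    (fun t ht => (hρ t (hsub ht)).mono hsub) (fun t ht => (hρ' t (hsub ht)).mono hsub)
    (fun t _ => (hasDerivAt_dampedSin b ω t₀ K t).hasDerivWithinAt)
    (fun t _ => (hasDerivAt_dampedSinDeriv b ω t₀ K t).hasDerivWithinAt)
    (fun t ht => hρ_super t (hsub (Ioo_subset_Icc_self ht))) (fun t _ => by ring)
    (fun t ht => (dampedSin_pos hω hK ⟨ht.1.le, ht.2.trans_le hsK⟩).le) h_start

theorem supersolution_nonpos_at_node (hω : 0 < ω) (hK : ω * (K - t₀) < π)
    (hρ : ∀ t ∈ Icc t₀ T, HasDerivWithinAt ρ (ρ' t) (Icc t₀ T) t)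
    (hρ' : ∀ t ∈ Icc t₀ T, HasDerivWithinAt ρ' (ρ'' t) (Icc t₀ T) t)
    (hρ_super : ∀ t ∈ Icc t₀ T, ρ'' t + 2 * b * ρ' t + (b ^ 2 + ω ^ 2) * ρ t ≤ 0)
    (h_start : dampedSin b ω t₀ K t₀ * ρ' t₀ ≤ ρ t₀ * dampedSinDeriv b ω t₀ K t₀)
    (ht₀K : t₀ ≤ K) (hKT : K ≤ T) : ρ K ≤ 0 := by
  have h := dampedSin_mul_deriv_le hω hK hρ hρ' hρ_super h_start hKT le_rfl K
    (right_mem_Icc.2 ht₀K)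
  rw [dampedSin_node, zero_mul] at h
  exact nonpos_of_mul_nonneg_left h (dampedSinDeriv_node_neg hω)

theorem supersolution_le_mul_dampedSin (hω : 0 < ω) (hK : ω * (K - t₀) < π)
    (hρ : ∀ t ∈ Icc t₀ T, HasDerivWithinAt ρ (ρ' t) (Icc t₀ T) t)
    (hρ' : ∀ t ∈ Icc t₀ T, HasDerivWithinAt ρ' (ρ'' t) (Icc t₀ T) t)
    (hρ_super : ∀ t ∈ Icc t₀ T, ρ'' t + 2 * b * ρ' t + (b ^ 2 + ω ^ 2) * ρ t ≤ 0)
    (h_start : dampedSin b ω t₀ K t₀ * ρ' t₀ ≤ ρ t₀ * dampedSinDeriv b ω t₀ K t₀)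
    {τ : ℝ} (hτ : τ ∈ Icc t₀ T) (hτK : τ < K) :
    ρ τ ≤ ρ t₀ / dampedSin b ω t₀ K t₀ * dampedSin b ω t₀ K τ := by
  have hsub : Icc t₀ τ ⊆ Icc t₀ T := Icc_subset_Icc_right hτ.2
  have hS_pos (t : ℝ) (ht : t ∈ Icc t₀ τ) : 0 < dampedSin b ω t₀ K t :=
    dampedSin_pos hω hK ⟨ht.1, ht.2.trans_lt hτK⟩
  have hanti := antitoneOn_div_of_mul_deriv_le (fun t ht => (hρ t (hsub ht)).mono hsub)
    (fun t _ => (hasDerivAt_dampedSin b ω t₀ K t).hasDerivWithinAt) hS_pos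
    (fun t ht => dampedSin_mul_deriv_le hω hK hρ hρ' hρ_super h_start hτ.2 hτK.le t
      (Ioo_subset_Icc_self ht))
  have h : ρ τ / dampedSin b ω t₀ K τ ≤ ρ t₀ / dampedSin b ω t₀ K t₀ :=
    hanti (left_mem_Icc.2 hτ.1) (right_mem_Icc.2 hτ.1) hτ.1
  rwa [div_le_iff₀ (hS_pos τ (right_mem_Icc.2 hτ.1))] at h

end Comparison

theorem sin_eq_sqrt_div_of_cos_eq {b c W : ℝ} (hc : 0 < c) (hW : W ∈ Icc 0 π)
    (hcos : cos W = -(b / c)) : sin W = √(c ^ 2 - b ^ 2) / c := by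
  rw [sin_eq_sqrt_one_sub_cos_sq hW.1 hW.2, hcos,
    show 1 - (-(b / c)) ^ 2 = (c ^ 2 - b ^ 2) / c ^ 2 by field_simp,
    sqrt_div' _ (sq_nonneg c), sqrt_sq hc.le]

theorem sturm_comparison_upper_decreasing_general
    (b c W : ℝ) (hb : 0 ≤ b) (hbc : b < c)
    (hW : W ∈ Set.Ico (π / 2) π) (hcosW : Real.cos W = -(b / c))
    (ω : ℝ) (hω : ω = Real.sqrt (c ^ 2 - b ^ 2))
    (Tp : ℝ) (hTp : Tp = W / ω)
    (T₁ T : ℝ)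
    (ρ ρ' ρ'' : ℝ → ℝ)
    (hd1 : ∀ t ∈ Set.Icc T₁ T, HasDerivWithinAt ρ (ρ' t) (Set.Icc T₁ T) t)
    (hd2 : ∀ t ∈ Set.Icc T₁ T, HasDerivWithinAt ρ' (ρ'' t) (Set.Icc T₁ T) t)
    (h1' : ρ' T₁ = 0)
    (hpos : ∀ τ ∈ Set.Ico T₁ T, 0 < ρ τ)
    (hineq : ∀ τ ∈ Set.Icc T₁ T, ρ'' τ + 2 * b * ρ' τ + c ^ 2 * ρ τ ≤ 0) :
    T ≤ T₁ + Tp ∧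
      ∀ τ ∈ Set.Ico T₁ T,
        ρ τ ≤ ρ T₁ * (c / ω) * Real.exp (-(b * (τ - T₁))) *
            Real.sin (ω * (T₁ + Tp - τ)) := by
  have hc : 0 < c := hb.trans_lt hbc
  have hω_pos : 0 < ω := hω ▸ sqrt_pos.2 (by nlinarith)
  have hc_sq : c ^ 2 = b ^ 2 + ω ^ 2 := by rw [hω, sq_sqrt (by nlinarith)]; ring
  have hW_pos : 0 < W := lt_of_lt_of_le (by positivity) hW.1
  have hsinW : sin W = ω / c := hω ▸ sin_eq_sqrt_div_of_cos_eq hc ⟨hW_pos.le, hW.2.le⟩ hcosW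
  set K := T₁ + Tp
  have hωK : ω * (K - T₁) = W := by simp only [K, hTp]; field_simp; ring
  have hK : ω * (K - T₁) < π := hωK ▸ hW.2
  have h_start : dampedSin b ω T₁ K T₁ * ρ' T₁ ≤ ρ T₁ * dampedSinDeriv b ω T₁ K T₁ := by
    rw [h1', dampedSinDeriv_start, hωK, hsinW, hcosW]
    exact le_of_eq (by ring)
  have hρ_super (t) (ht : t ∈ Icc T₁ T) := hc_sq ▸ hineq t ht
  have hT_le : T ≤ K := by
    by_contra! hKT
    have hT₁K : T₁ < K := by simp only [K, hTp]; linarith [div_pos hW_pos hω_pos]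
    exact (hpos K ⟨hT₁K.le, hKT⟩).not_ge (supersolution_nonpos_at_node hω_pos hK hd1 hd2
      hρ_super h_start hT₁K.le hKT.le)
  refine ⟨hT_le, fun τ hτ => ?_⟩
  calc ρ τ ≤ ρ T₁ / dampedSin b ω T₁ K T₁ * dampedSin b ω T₁ K τ :=
        supersolution_le_mul_dampedSin hω_pos hK hd1 hd2 hρ_super h_start
          (Ico_subset_Icc_self hτ) (hτ.2.trans_le hT_le)
    _ = _ := by rw [dampedSin_start, hωK, hsinW]; simp only [dampedSin]; field_simp

/-- Upper Sturm comparison, decreasing phase: a `C²` function `ρ` on `[T₁, T]` with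
`ρ(T₁) > 0`, `ρ'(T₁) = 0`, `ρ > 0` on `[T₁, T)`, and `ρ'' + 2b·ρ' + c²·ρ ≤ 0` on
`[T₁, T]` satisfies `T ≤ T₁ + T₊` with `T₊ = W₊(b,c)/ω`, and is dominated by the
explicit oscillator solution `ρ(T₁)·(c/ω)·e^{-b(τ-T₁)}·sin(ω(T₁+T₊-τ))` on
`[T₁, T)`. -/
theorem sturm_comparison_upper_decreasing
    (b c W : ℝ) (hb : 0 ≤ b) (hbc : b < c)
    (hW : W ∈ Set.Ico (π / 2) π) (hcosW : Real.cos W = -(b / c))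
    (ω : ℝ) (hω : ω = Real.sqrt (c ^ 2 - b ^ 2))
    (Tp : ℝ) (hTp : Tp = W / ω)
    (T₁ T : ℝ) (hT : T₁ < T)
    (ρ ρ' ρ'' : ℝ → ℝ)
    (hd1 : ∀ t ∈ Set.Icc T₁ T, HasDerivWithinAt ρ (ρ' t) (Set.Icc T₁ T) t)
    (hd2 : ∀ t ∈ Set.Icc T₁ T, HasDerivWithinAt ρ' (ρ'' t) (Set.Icc T₁ T) t)
    (hcont : ContinuousOn ρ'' (Set.Icc T₁ T))
    (h1 : 0 < ρ T₁) (h1' : ρ' T₁ = 0)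
    (hpos : ∀ τ ∈ Set.Ico T₁ T, 0 < ρ τ)
    (hineq : ∀ τ ∈ Set.Icc T₁ T, ρ'' τ + 2 * b * ρ' τ + c ^ 2 * ρ τ ≤ 0) :
    T ≤ T₁ + Tp ∧
      ∀ τ ∈ Set.Ico T₁ T,
        ρ τ ≤ ρ T₁ * (c / ω) * Real.exp (-(b * (τ - T₁))) *
            Real.sin (ω * (T₁ + Tp - τ)) :=
  sturm_comparison_upper_decreasing_general b c W hb hbc hW hcosW ω hω Tp hTp T₁ T ρ ρ' ρ'' hd1 hd2
    h1' hpos hineq
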